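/- arXiv:1703.06640 — 2 statements merged into one kernel-verified Lean document; each statement's English description precedes it below -/
import Mathlib

section
/- If each f_n commutes with f, each f_n is bijective, Σ_{n=1}^∞ D(f_n, f) < ∞, and the non-autonomous system (X, F) is equicontinuous, then (X, f) is equicontinuous. -/
open Filter Metric Set Topology

noncomputable def supD {X : Type*} [MetricSpace X] (g h : X → X) : ℝ :=
  ⨆ x, dist (g x) (h x)

def omega {X : Type*} (fn : ℕ → X → X) : ℕ → X → X
  | 0 => id
  | k + 1 => fn (k + 1) ∘ omega fn k

def omegaSeg {X : Type*} (fn : ℕ → X → X) (n : ℕ) : ℕ → X → X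
  | 0 => id
  | k + 1 => fn (n + k + 1) ∘ omegaSeg fn n k

lemma supD_bound {X : Type*} [MetricSpace X] [CompactSpace X] {g h : X → X}
    (hg : Continuous g) (hh : Continuous h) (x : X) :
    dist (g x) (h x) ≤ supD g h :=
  le_ciSup (isCompact_range (hg.dist hh)).bddAbove x

lemma supD_nonneg {X : Type*} [MetricSpace X] [Nonempty X] (g h : X → X) :
    0 ≤ supD g h :=
  Real.iSup_nonneg fun _ => dist_nonneg

lemma omega_continuous {X : Type*} [TopologicalSpace X] (fn : ℕ → X → X)
    (hfn : ∀ n, Continuous (fn n)) (n : ℕ) : Continuous (omega fn n) := by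
  induction n with
  | zero => exact continuous_id
  | succ k ih => exact (hfn (k + 1)).comp ih

lemma omega_bijective {X : Type*} (fn : ℕ → X → X)
    (hbij : ∀ n, Function.Bijective (fn n)) (n : ℕ) : Function.Bijective (omega fn n) := by
  induction n with
  | zero => exact Function.bijective_id
  | succ k ih => exact (hbij (k + 1)).comp ih

lemma omegaSeg_comm {X : Type*} (f : X → X) (fn : ℕ → X → X)
    (hcomm : ∀ n, fn n ∘ f = f ∘ fn n) (n k : ℕ) (z : X) :
    omegaSeg fn n k (f z) = f (omegaSeg fn n k z) := by
  induction k with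
  | zero => rfl
  | succ k ih =>
    show fn (n + k + 1) (omegaSeg fn n k (f z)) = f (fn (n + k + 1) (omegaSeg fn n k z))
    rw [ih]
    exact congrFun (hcomm (n + k + 1)) _

lemma omegaSeg_omega {X : Type*} (fn : ℕ → X → X) (n k : ℕ) (z : X) :
    omegaSeg fn n k (omega fn n z) = omega fn (n + k) z := by
  induction k with
  | zero => rfl
  | succ k ih =>
    show fn (n + k + 1) (omegaSeg fn n k (omega fn n z)) = omega fn (n + (k + 1)) z
    rw [ih]
    rfl

lemma key_est {X : Type*} [MetricSpace X] [CompactSpace X] (f : X → X) (fn : ℕ → X → X)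
    (hf : Continuous f) (hfn : ∀ n, Continuous (fn n))
    (hcomm : ∀ n, fn n ∘ f = f ∘ fn n) (n k : ℕ) (z : X) :
    dist (omegaSeg fn n k z) (f^[k] z) ≤ ∑ j ∈ Finset.range k, supD (fn (n + j + 1)) f := by
  induction k generalizing z with
  | zero => simp [omegaSeg]
  | succ k ih =>
    rw [Finset.sum_range_succ]
    have h1 : dist (omegaSeg fn n (k + 1) z) (f^[k + 1] z)
        ≤ dist (omegaSeg fn n (k + 1) z) (omegaSeg fn n k (f z))
          + dist (omegaSeg fn n k (f z)) (f^[k + 1] z) := dist_triangle _ _ _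
    have h2 : omegaSeg fn n k (f z) = f (omegaSeg fn n k z) := omegaSeg_comm f fn hcomm n k z
    have h3 : dist (omegaSeg fn n (k + 1) z) (omegaSeg fn n k (f z)) ≤ supD (fn (n + k + 1)) f := by
      rw [h2]
      exact supD_bound (hfn _) hf _
    have h4 : dist (omegaSeg fn n k (f z)) (f^[k + 1] z)
        ≤ ∑ j ∈ Finset.range k, supD (fn (n + j + 1)) f := by
      rw [Function.iterate_succ_apply]
      exact ih (f z)
    linarith

theorem stmt4 {X : Type*} [MetricSpace X] [CompactSpace X] [Nonempty X]
    (f : X → X) (fn : ℕ → X → X)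
    (hf : Continuous f) (hfn : ∀ n, Continuous (fn n))
    (hcomm : ∀ n, fn n ∘ f = f ∘ fn n)
    (hbij : ∀ n, Function.Bijective (fn n))
    (hsum : Summable fun n => supD (fn (n + 1)) f)
    (heq : ∀ ε > 0, ∃ δ > 0, ∀ x y : X, dist x y < δ →
      ∀ n : ℕ, dist (omega fn n x) (omega fn n y) < ε) :
    ∀ ε > 0, ∃ δ > 0, ∀ x y : X, dist x y < δ →
      ∀ n : ℕ, dist (f^[n] x) (f^[n] y) < ε := by
  intro ε hε
  obtain ⟨δ, hδ, hδprop⟩ := heq (ε / 3) (by linarith)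
  -- choose N with small tail
  have htail : Tendsto (fun i => ∑' k, supD (fn (k + i + 1)) f) atTop (𝓝 0) :=
    tendsto_sum_nat_add (fun n => supD (fn (n + 1)) f)
  obtain ⟨N, hN⟩ := (htail.eventually (eventually_lt_nhds (show (0:ℝ) < ε/3 by linarith))).exists
  have hsumN : Summable fun k => supD (fn (k + N + 1)) f := by
    have := (summable_nat_add_iff (f := fun n => supD (fn (n + 1)) f) N).2 hsum
    exact this
  have hfin : ∀ k : ℕ, ∑ j ∈ Finset.range k, supD (fn (N + j + 1)) f < ε / 3 := by
    intro k
    calc ∑ j ∈ Finset.range k, supD (fn (N + j + 1)) f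
        = ∑ j ∈ Finset.range k, supD (fn (j + N + 1)) f := by
          apply Finset.sum_congr rfl; intro j _; rw [Nat.add_comm N j]
      _ ≤ ∑' j, supD (fn (j + N + 1)) f :=
          Summable.sum_le_tsum _ (fun i _ => supD_nonneg _ _) hsumN
      _ < ε / 3 := hN
  -- omega fn N is a homeomorphism
  let e : X ≃ X := Equiv.ofBijective _ (omega_bijective fn hbij N)
  have hecont : Continuous e := omega_continuous fn hfn N
  let φ : X ≃ₜ X := Continuous.homeoOfEquivCompactToT2 (f := e) hecont
  have hinv : UniformContinuous φ.symm :=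
    CompactSpace.uniformContinuous_of_continuous φ.symm.continuous
  obtain ⟨δ', hδ', hδ'prop⟩ := Metric.uniformContinuous_iff.mp hinv δ hδ
  refine ⟨δ', hδ', fun x y hxy k => ?_⟩
  set u := φ.symm x with hu
  set v := φ.symm y with hv
  have huv : dist u v < δ := hδ'prop hxy
  have hxu : omega fn N u = x := φ.apply_symm_apply x
  have hyv : omega fn N v = y := φ.apply_symm_apply y
  have hmid : dist (omegaSeg fn N k x) (omegaSeg fn N k y) < ε / 3 := by
    rw [← hxu, ← hyv, omegaSeg_omega, omegaSeg_omega]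
    exact hδprop u v huv (N + k)
  have h1 := key_est f fn hf hfn hcomm N k x
  have h2 := key_est f fn hf hfn hcomm N k y
  have htri : dist (f^[k] x) (f^[k] y)
      ≤ dist (f^[k] x) (omegaSeg fn N k x) + dist (omegaSeg fn N k x) (omegaSeg fn N k y)
        + dist (omegaSeg fn N k y) (f^[k] y) := dist_triangle4 _ _ _ _
  rw [dist_comm (f^[k] x) (omegaSeg fn N k x)] at htri
  have := hfin k
  linarith
end

section
/- If (f_n) converges uniformly to f and x is periodic for the non-autonomous system (X, F) with period k (i.e., ω_{nk}(x) = x for all n ∈ ℕ), then f^k(x) = x, i.e., x is periodic for (X, f). -/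
open Filter Metric Set
open Topology

lemma omega_add {X : Type*} (fn : ℕ → X → X) (n j : ℕ) :
    omega fn (n + j) = omegaSeg fn n j ∘ omega fn n := by
  induction j with
  | zero => simp [omegaSeg]
  | succ j ih =>
    show omega fn (n + j + 1) = _
    rw [omega, ih]
    rfl

lemma tendstoUniformly_comp_index {X Y : Type*} [UniformSpace Y]
    {F : ℕ → X → Y} {f : X → Y} (h : TendstoUniformly F f atTop)
    {g : ℕ → ℕ} (hg : Tendsto g atTop atTop) :
    TendstoUniformly (fun n => F (g n)) f atTop :=
  fun u hu => hg.eventually (h u hu)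

theorem stmt13 {X : Type*} [MetricSpace X] [CompactSpace X] [Nonempty X]
    (f : X → X) (fn : ℕ → X → X)
    (hf : Continuous f) (hfn : ∀ n, Continuous (fn n))
    (huc : TendstoUniformly fn f atTop)
    (x : X) (k : ℕ) (hk : 1 ≤ k)
    (hper : ∀ n : ℕ, omega fn (n * k) x = x) :
    f^[k] x = x := by
  -- key: omegaSeg fn (n*k) k x = x
  have hseg : ∀ n : ℕ, omegaSeg fn (n * k) k x = x := by
    intro n
    have h1 := hper (n + 1)
    rw [add_mul, one_mul, omega_add] at h1
    simpa [hper n] using h1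
  -- omegaSeg fn (n*k) j x tends to f^[j] x
  have htd : ∀ j : ℕ, Tendsto (fun n => omegaSeg fn (n * k) j x) atTop (𝓝 (f^[j] x)) := by
    intro j
    induction j with
    | zero => simpa [omegaSeg] using tendsto_const_nhds
    | succ j ih =>
      have hg : Tendsto (fun n => n * k + j + 1) atTop atTop :=
        (tendsto_atTop_atTop_of_monotone
          (fun a b hab => by
            have := Nat.mul_le_mul_right k hab; omega)
          (fun b => ⟨b, by nlinarith [hk]⟩))
      have huc' := tendstoUniformly_comp_index huc hg
      have := huc'.tendsto_comp (hf.continuousAt) ih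
      simpa [omegaSeg, Function.iterate_succ_apply'] using this
  have hx : Tendsto (fun _ : ℕ => x) atTop (𝓝 (f^[k] x)) := by
    simpa [hseg] using htd k
  exact (tendsto_nhds_unique tendsto_const_nhds hx).symm
end
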